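/- Let B and C be A-algebras, D an A-algebra with maps B → D surjective and C → D, and let R = B ×_D C be the fiber product ring. If C → D is a finite (module-finite) ring map, then B is a finite module over R = B ×_D C. -/

import Mathlib

/-- Let `R = B ×_D C` be the fiber product of `B → D` (surjective) and `C → D`
(module-finite).  Then `B`, viewed as an `R`-module via the first projection
`R → B`, is finitely generated. -/
theorem fiberProduct_finite_over_B
    (B C D : Type*) [CommRing B] [CommRing C] [CommRing D]
    (f : B →+* D) (g : C →+* D) (hf : Function.Surjective f)
    (hfin : @Module.Finite C D _ _ (Module.compHom D g)) :
    @Module.Finite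
      (RingHom.eqLocus (f.comp (RingHom.fst B C)) (g.comp (RingHom.snd B C))) B _ _
      (Module.compHom B
        ((RingHom.fst B C).comp
          (RingHom.eqLocus (f.comp (RingHom.fst B C)) (g.comp (RingHom.snd B C))).subtype)) := by
  classical
  letI : Module C D := Module.compHom D g
  set R := RingHom.eqLocus (f.comp (RingHom.fst B C)) (g.comp (RingHom.snd B C)) with hR
  letI : Module R B := Module.compHom B ((RingHom.fst B C).comp R.subtype)
  obtain ⟨s, hs⟩ := hfin.fg_top
  let β : D → B := Function.surjInv hf
  have hβ : ∀ d, f (β d) = d := fun d => Function.surjInv_eq hf d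
  refine ⟨⟨insert 1 (s.image β), ?_⟩⟩
  rw [eq_top_iff]
  intro b _
  have hb : f b ∈ Submodule.span C (s : Set D) := by rw [hs]; trivial
  rw [Submodule.mem_span_finset] at hb
  obtain ⟨φ, -, hφ⟩ := hb
  let γ : D → B := fun i => β (g (φ i))
  have hγ : ∀ i, f (γ i) = g (φ i) := fun i => hβ _
  set b₀ := b - ∑ i ∈ s, γ i * β i with hb₀
  have hfb₀ : f b₀ = 0 := by
    have : (∑ i ∈ s, φ i • i) = ∑ i ∈ s, g (φ i) * i :=
      Finset.sum_congr rfl fun i _ => rfl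
    simp only [hb₀, map_sub, map_sum, map_mul, hγ, hβ, sub_eq_zero]
    rw [← hφ, this]
  have hr₀ : ((b₀, (0 : C)) : B × C) ∈ R := by
    show f b₀ = g 0
    simp [hfb₀]
  have hri : ∀ i, ((γ i, φ i) : B × C) ∈ R := fun i => hγ i
  have hbeq : b = (⟨(b₀, 0), hr₀⟩ : R) • (1 : B)
      + ∑ i ∈ s, (⟨(γ i, φ i), hri i⟩ : R) • β i := by
    have h1 : (⟨(b₀, 0), hr₀⟩ : R) • (1 : B) = b₀ := by
      show b₀ * 1 = b₀; ring
    have h2 : ∀ i ∈ s, (⟨(γ i, φ i), hri i⟩ : R) • β i = γ i * β i :=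
      fun i _ => rfl
    rw [h1, Finset.sum_congr rfl h2, hb₀]
    ring
  rw [hbeq]
  refine Submodule.add_mem _ (Submodule.smul_mem _ _ ?_) (Submodule.sum_mem _ fun i hi =>
    Submodule.smul_mem _ _ ?_)
  · exact Submodule.subset_span (by simp)
  · exact Submodule.subset_span (by simp; exact Or.inr ⟨i, hi, rfl⟩)
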